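/- arXiv:1503.06251 — 4 statements merged into one kernel-verified Lean document; each statement's English description precedes it below -/
import Mathlib

section
/- The map ψ combining two quasi-tilings, defined by [ψ(T,S)](g) = T(g) if T(g) ≠ ∅, = S(g) if S(g) ≠ ∅ and gS(g) is disjoint from all tile-translates of T, and = ∅ otherwise, is continuous and commutes with the shift action of G. -/
open Pointwise

/-- Disjoint quasi-tilings for a tile set. -/
def IsQT {G : Type*} [Group G] (𝒯 : Finset (Finset G)) (T : G → Finset G) : Prop :=
  (∀ g, T g ∈ 𝒯 ∨ T g = ∅) ∧
  ∀ g h : G, g ≠ h → Disjoint (g • ((T g : Finset G) : Set G)) (h • ((T h : Finset G) : Set G))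

open Classical in
/-- The combination map `ψ`: keep all tiles of `T`, and add each tile of `S` whose
translate is disjoint from all tile-translates of `T`. -/
noncomputable def psi {G : Type*} [Group G] (T S : G → Finset G) : G → Finset G :=
  fun g =>
    if T g ≠ ∅ then T g
    else if S g ≠ ∅ ∧ Disjoint (g • ((S g : Finset G) : Set G))
        (⋃ h, h • ((T h : Finset G) : Set G)) then S g
    else ∅

/-!
Whether `ψ(T, S)` has a tile at `g` depends only on `T g`, `S g` and on the `T h` for the
finitely many `h` whose tiles can meet `g • S g`: if every tile lies in `K`, these are the
`h ∈ (g • S g) * K⁻¹`. Hence each coordinate of `ψ` is locally constant. Shifting `T` by `g`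
shifts the union of its tiles by `g`, and disjointness is invariant under translation.
-/

open Topology

namespace IsQT

variable {G : Type*} [Group G] {𝒯 : Finset (Finset G)} {T : G → Finset G}

lemma subset_sup [DecidableEq G] (hT : IsQT 𝒯 T) (g : G) : T g ⊆ 𝒯.sup id := by
  rcases hT.1 g with h | h
  · exact Finset.le_sup (f := id) h
  · simp [h]

end IsQT

section Psi

variable {G : Type*} [Group G]

lemma iUnion_smul_shift (T : G → Finset G) (g : G) :
    ⋃ k, k • ((T (g⁻¹ * k) : Finset G) : Set G) = g • ⋃ k, k • ((T k : Finset G) : Set G) := by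
  rw [Set.smul_set_iUnion, ← (Equiv.mulLeft g).surjective.iUnion_comp]
  simp [smul_smul]

lemma psi_shift (g : G) (T S : G → Finset G) :
    psi (fun h => T (g⁻¹ * h)) (fun h => S (g⁻¹ * h)) = fun h => psi T S (g⁻¹ * h) := by
  funext h
  have hdisj : ∀ s : Set G, Disjoint (h • s) (⋃ k, k • ((T (g⁻¹ * k) : Finset G) : Set G)) ↔
      Disjoint ((g⁻¹ * h) • s) (⋃ k, k • ((T k : Finset G) : Set G)) := fun s => by
    rw [iUnion_smul_shift, ← Set.disjoint_smul_set (a := g⁻¹), smul_smul, inv_smul_smul]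
  simp only [psi]
  rw [hdisj]

-- A tile `k • t` with `t ⊆ K` meets `g • s` only if `k ∈ (g • s) * K⁻¹`.
lemma disjoint_iUnion_of_eqOn [DecidableEq G] {K s : Finset G} {T T' : G → Finset G} {g : G}
    (hT' : ∀ h, T' h ⊆ K) (hTT' : ∀ h ∈ g • s * K⁻¹, T' h = T h)
    (hd : Disjoint (g • (s : Set G)) (⋃ h, h • ((T h : Finset G) : Set G))) :
    Disjoint (g • (s : Set G)) (⋃ h, h • ((T' h : Finset G) : Set G)) := by
  rw [Set.disjoint_iUnion_right] at hd ⊢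
  intro h
  by_cases hh : h ∈ g • s * K⁻¹
  · rw [hTT' h hh]; exact hd h
  · rw [Set.disjoint_left]
    rintro _ hx ⟨t, ht, rfl⟩
    refine hh ?_
    have hx' : h • t ∈ g • s := by rwa [← Finset.mem_coe, Finset.coe_smul_finset]
    simpa [smul_eq_mul, mul_assoc] using Finset.mul_mem_mul hx' (Finset.inv_mem_inv (hT' h ht))

lemma psi_apply_eq_of_eqOn [DecidableEq G] {K : Finset G} {T T' S S' : G → Finset G} {g : G}
    (hT : ∀ h, T h ⊆ K) (hT' : ∀ h, T' h ⊆ K) (hS : S' g = S g)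
    (hTT' : ∀ h ∈ insert g (g • S g * K⁻¹), T' h = T h) :
    psi T' S' g = psi T S g := by
  have hTT'' : ∀ h ∈ g • S g * K⁻¹, T' h = T h :=
    fun h hh => hTT' h (Finset.mem_insert_of_mem hh)
  have hdisj : Disjoint (g • ((S g : Finset G) : Set G)) (⋃ h, h • ((T' h : Finset G) : Set G)) ↔
      Disjoint (g • ((S g : Finset G) : Set G)) (⋃ h, h • ((T h : Finset G) : Set G)) :=
    ⟨disjoint_iUnion_of_eqOn hT fun h hh => (hTT'' h hh).symm,
      disjoint_iUnion_of_eqOn hT' hTT''⟩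
  simp only [psi]
  rw [hTT' g (Finset.mem_insert_self _ _), hS, hdisj]

lemma continuousOn_psi [TopologicalSpace (Finset G)] [DiscreteTopology (Finset G)]
    (K : Finset G) :
    ContinuousOn (fun p : (G → Finset G) × (G → Finset G) => psi p.1 p.2)
      {p | ∀ h, p.1 h ⊆ K} := by
  classical
  intro p hp
  refine continuousWithinAt_pi.2 fun g => ?_
  rw [ContinuousWithinAt, nhds_discrete, Filter.tendsto_pure]
  have hT : ∀ᶠ q in 𝓝 p, ∀ h ∈ insert g (g • p.2 g * K⁻¹), q.1 h = p.1 h :=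
    (Finset.eventually_all _).2 fun h _ =>
      ((continuous_apply h).comp continuous_fst).continuousAt.eventually_mem
        ((isOpen_discrete {p.1 h}).mem_nhds rfl)
  have hS : ∀ᶠ q in 𝓝 p, q.2 g = p.2 g :=
    ((continuous_apply g).comp continuous_snd).continuousAt.eventually_mem
      ((isOpen_discrete {p.2 g}).mem_nhds rfl)
  filter_upwards [nhdsWithin_le_nhds hT, nhdsWithin_le_nhds hS, self_mem_nhdsWithin]
    with q hqT hqS hq
  exact psi_apply_eq_of_eqOn hp hq hqS hqT

end Psi

theorem stmt_10_general {G : Type*} [Group G]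
    (𝒯 𝒮 : Finset (Finset G)) :
    (@ContinuousOn ((G → Finset G) × (G → Finset G)) (G → Finset G)
      (@instTopologicalSpaceProd _ _
        (@Pi.topologicalSpace G (fun _ => Finset G) (fun _ => ⊥))
        (@Pi.topologicalSpace G (fun _ => Finset G) (fun _ => ⊥)))
      (@Pi.topologicalSpace G (fun _ => Finset G) (fun _ => ⊥))
      (fun p => psi p.1 p.2)
      ({T | IsQT 𝒯 T} ×ˢ {S | IsQT 𝒮 S})) ∧
    ∀ (g : G) (T S : G → Finset G),
      psi (fun h => T (g⁻¹ * h)) (fun h => S (g⁻¹ * h)) = fun h => psi T S (g⁻¹ * h) := by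
  classical
  let _ : TopologicalSpace (Finset G) := ⊥
  have : DiscreteTopology (Finset G) := ⟨rfl⟩
  exact ⟨(continuousOn_psi (𝒯.sup id)).mono fun p hp => hp.1.subset_sup, psi_shift⟩

/-- `ψ` is continuous (on the spaces of disjoint `𝒯`- and
`𝒮`-quasi-tilings, with product-of-discrete topologies) and commutes with the shift. -/
theorem stmt_10 {G : Type*} [Group G]
    (𝒯 𝒮 : Finset (Finset G)) (h𝒯 : ∀ t ∈ 𝒯, (1 : G) ∈ t) (h𝒮 : ∀ t ∈ 𝒮, (1 : G) ∈ t) :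
    (@ContinuousOn ((G → Finset G) × (G → Finset G)) (G → Finset G)
      (@instTopologicalSpaceProd _ _
        (@Pi.topologicalSpace G (fun _ => Finset G) (fun _ => ⊥))
        (@Pi.topologicalSpace G (fun _ => Finset G) (fun _ => ⊥)))
      (@Pi.topologicalSpace G (fun _ => Finset G) (fun _ => ⊥))
      (fun p => psi p.1 p.2)
      ({T | IsQT 𝒯 T} ×ˢ {S | IsQT 𝒮 S})) ∧
    ∀ (g : G) (T S : G → Finset G),
      psi (fun h => T (g⁻¹ * h)) (fun h => S (g⁻¹ * h)) = fun h => psi T S (g⁻¹ * h) :=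
  stmt_10_general 𝒯 𝒮
end

section
/- If X ⊆ A^G is a shift (closed shift-invariant set) such that for some δ > 0 and every finite (1,δ)-invariant F ⊆ G, every x ∈ X vanishes on all but at most ε|F| elements of F, then the topological entropy of X satisfies h(X) ≤ ε·log(3|A|/ε). -/
open Pointwise Filter

/-- Projections of `X ⊆ A^G` to a finite set. -/
def proj {G A : Type*} (X : Set (G → A)) (K : Finset G) : Set (K → A) :=
  {f | ∃ x ∈ X, ∀ k : K, f k = x k}

/-- The word-metric ball of radius `r` for the generating set `gen`. -/
def ball {G : Type*} [Group G] [DecidableEq G] (gen : Finset G) (r : ℕ) : Finset G :=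
  (insert (1 : G) (gen ∪ gen⁻¹)) ^ r

/-- The `r`-boundary of a set `F ⊆ G`. -/
def bdry {G : Type*} [Group G] [DecidableEq G] (gen : Finset G) (r : ℕ) (F : Set G) : Set G :=
  {g | (∃ b ∈ ball gen r, g * b ∈ F) ∧ (∃ b ∈ ball gen r, g * b ∉ F)}

/-- The `r`-boundary ratio `ρ_r(F) = |∂_r F| / |F|`. -/
noncomputable def rho {G : Type*} [Group G] [DecidableEq G]
    (gen : Finset G) (r : ℕ) (F : Finset G) : ℝ :=
  ((bdry gen r (F : Set G)).ncard : ℝ) / F.card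

/-!
A point of `X` restricted to a nearly invariant `F` has at most `ε|F|` nonzero coordinates.
Counting such patterns with weight `t` per nonzero coordinate gives at most
`t^(-ε|F|) (1 + (|A|-1) t)^|F|` of them; the choice `t = ε/|A|` together with
`1 + x ≤ eˣ` and `e < 3` bounds this by `(3|A|/ε)^(ε|F|)`. Since the Følner sets are
eventually `(1,δ)`-invariant, the entropy is at most `ε log(3|A|/ε)`.
-/

open Finset

section Counting

variable {I A : Type*} [Fintype I] [DecidableEq I] [Fintype A] [DecidableEq A]

theorem sum_pow_card_filter_ne (z : A) (t : ℝ) :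
    ∑ f : I → A, t ^ #{i | f i ≠ z} = (1 + (Fintype.card A - 1) * t) ^ Fintype.card I := by
  have hz : ∑ a : A, (if a = z then 1 else t) = 1 + (Fintype.card A - 1) * t := by
    rw [Fintype.sum_eq_add_sum_compl z, if_pos rfl,
      sum_congr rfl fun a ha => if_neg (by simpa using ha), sum_const, card_compl,
      card_singleton, nsmul_eq_mul, Nat.cast_sub (Fintype.card_pos_iff.mpr ⟨z⟩)]
    simp
  calc ∑ f : I → A, t ^ #{i | f i ≠ z}
      = ∑ f : I → A, ∏ i, (if f i = z then 1 else t) := by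
        refine sum_congr rfl fun f _ => ?_
        rw [prod_ite]; simp
    _ = (1 + (Fintype.card A - 1) * t) ^ Fintype.card I := by
        rw [← Fintype.prod_sum fun (_ : I) (a : A) => if a = z then (1 : ℝ) else t, hz,
          prod_const, card_univ]

theorem card_le_of_card_filter_ne_le (z : A) {t m : ℝ} (ht0 : 0 < t) (ht1 : t ≤ 1)
    (S : Finset (I → A)) (hS : ∀ f ∈ S, (#{i | f i ≠ z} : ℝ) ≤ m) :
    (#S : ℝ) ≤ t ^ (-m) * (1 + (Fintype.card A - 1) * t) ^ Fintype.card I := by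
  calc (#S : ℝ) = ∑ _f ∈ S, (1 : ℝ) := by simp
    _ ≤ ∑ f ∈ S, t ^ (-m) * t ^ #{i | f i ≠ z} := by
        refine sum_le_sum fun f hf => ?_
        rw [← Real.rpow_natCast, ← Real.rpow_add ht0]
        exact Real.one_le_rpow_of_pos_of_le_one_of_nonpos ht0 ht1 (by linarith [hS f hf])
    _ ≤ ∑ f : I → A, t ^ (-m) * t ^ #{i | f i ≠ z} :=
        sum_le_sum_of_subset_of_nonneg (subset_univ S) fun _ _ _ => by positivity
    _ = _ := by rw [← mul_sum, sum_pow_card_filter_ne]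

theorem card_le_rpow_of_card_filter_ne_le (z : A) {ε : ℝ} (hε0 : 0 < ε) (hε1 : ε ≤ 1)
    (S : Finset (I → A)) (hS : ∀ f ∈ S, (#{i | f i ≠ z} : ℝ) ≤ ε * Fintype.card I) :
    (#S : ℝ) ≤ (3 * Fintype.card A / ε) ^ (ε * Fintype.card I) := by
  set a : ℝ := (Fintype.card A : ℝ)
  set N : ℝ := (Fintype.card I : ℝ)
  have ha : 1 ≤ a := Nat.one_le_cast.mpr (Fintype.card_pos_iff.mpr ⟨z⟩)
  have ha0 : 0 < a := by linarith
  have ht1 : ε / a ≤ 1 := (div_le_one ha0).mpr (by linarith)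
  have hbase : 1 + (a - 1) * (ε / a) ≤ Real.exp ε := by
    have : (a - 1) * (ε / a) ≤ ε := by
      rw [mul_div_assoc']; exact div_le_of_le_mul₀ ha0.le hε0.le (by nlinarith)
    linarith [Real.add_one_le_exp ε]
  have hexp : Real.exp ε ^ Fintype.card I ≤ 3 ^ (ε * N) := by
    rw [← Real.exp_nat_mul, mul_comm, ← Real.exp_one_rpow]
    exact Real.rpow_le_rpow (Real.exp_pos 1).le (by linarith [Real.exp_one_lt_d9]) (by positivity)
  calc (#S : ℝ) ≤ (ε / a) ^ (-(ε * N)) * (1 + (a - 1) * (ε / a)) ^ Fintype.card I :=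
        card_le_of_card_filter_ne_le z (by positivity) ht1 S hS
    _ ≤ (a / ε) ^ (ε * N) * 3 ^ (ε * N) := by
        rw [Real.rpow_neg (by positivity), ← Real.inv_rpow (by positivity), inv_div]
        gcongr
        exact hexp.trans' (pow_le_pow_left₀ (by positivity) hbase _)
    _ = (3 * a / ε) ^ (ε * N) := by
        rw [← Real.mul_rpow (by positivity) (by positivity)]; ring_nf

theorem log_card_le_of_card_filter_ne_le (z : A) {ε : ℝ} (hε0 : 0 < ε) (hε1 : ε ≤ 1)
    (S : Finset (I → A)) (hS : ∀ f ∈ S, (#{i | f i ≠ z} : ℝ) ≤ ε * Fintype.card I) :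
    Real.log #S ≤ ε * Fintype.card I * Real.log (3 * Fintype.card A / ε) := by
  have hbase : 1 ≤ 3 * (Fintype.card A : ℝ) / ε := by
    have : (1 : ℝ) ≤ Fintype.card A := by exact_mod_cast Fintype.card_pos_iff.mpr ⟨z⟩
    rw [le_div_iff₀ hε0]; linarith
  rcases (#S).eq_zero_or_pos with hS0 | hSpos
  · rw [hS0, Nat.cast_zero, Real.log_zero]
    exact mul_nonneg (by positivity) (Real.log_nonneg hbase)
  · rw [← Real.log_rpow (by positivity)]
    exact Real.log_le_log (by exact_mod_cast hSpos)
      (card_le_rpow_of_card_filter_ne_le z hε0 hε1 S hS)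

end Counting

theorem card_filter_ne_eq_ncard {G A : Type*} [DecidableEq A] (z : A) (x : G → A)
    (F : Finset G) : #{i : F | x i ≠ z} = ({g ∈ (F : Set G) | x g ≠ z} : Set G).ncard := by
  have : ({g ∈ (F : Set G) | x g ≠ z} : Set G)
      = (({i : F | x i ≠ z} : Finset F).map (Function.Embedding.subtype _) : Finset G) := by
    ext g; simp [and_comm]
  rw [this, Set.ncard_coe_finset, card_map]

theorem log_ncard_proj_le {G A : Type*} [Fintype A] (z : A) {ε : ℝ} (hε0 : 0 < ε)
    (hε1 : ε ≤ 1) (X : Set (G → A)) (F : Finset G)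
    (hX : ∀ x ∈ X, (({g ∈ (F : Set G) | x g ≠ z}).ncard : ℝ) ≤ ε * #F) :
    Real.log (proj X F).ncard ≤ ε * #F * Real.log (3 * Fintype.card A / ε) := by
  classical
  have hfin : (proj X F).Finite := Set.toFinite _
  rw [Set.ncard_eq_toFinset_card _ hfin, ← Fintype.card_coe F]
  refine log_card_le_of_card_filter_ne_le z hε0 hε1 _ fun f hf => ?_
  obtain ⟨x, hx, rfl⟩ : ∃ x ∈ X, f = fun k : F => x k := by
    obtain ⟨x, hx, hfx⟩ := (Set.Finite.mem_toFinset hfin).mp hf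
    exact ⟨x, hx, funext hfx⟩
  rw [card_filter_ne_eq_ncard, Fintype.card_coe]
  exact hX x hx

theorem stmt_11_general {G A : Type*} [Group G] [DecidableEq G] [Fintype A]
    (gen : Finset G)
    (z : A) (X : Set (G → A))
    (ε : ℝ) (hε0 : 0 < ε) (hε1 : ε ≤ 1)
    (δ : ℝ) (hδ : 0 < δ)
    (hvanish : ∀ F : Finset G, F.Nonempty → rho gen 1 F ≤ δ →
      ∀ x ∈ X, (({g ∈ (F : Set G) | x g ≠ z}).ncard : ℝ) ≤ ε * F.card)
    (Fn : ℕ → Finset G) (hFne : ∀ n, (Fn n).Nonempty)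
    (hFol : Tendsto (fun n => rho gen 1 (Fn n)) atTop (nhds 0))
    (h : ℝ)
    (hlim : Tendsto (fun n => Real.log ((proj X (Fn n)).ncard) / (Fn n).card)
      atTop (nhds h)) :
    h ≤ ε * Real.log (3 * Fintype.card A / ε) := by
  refine le_of_tendsto hlim ?_
  filter_upwards [hFol.eventually (gt_mem_nhds hδ)] with n hn
  have hcard : 0 < ((Fn n).card : ℝ) := by exact_mod_cast (hFne n).card_pos
  rw [div_le_iff₀ hcard, mul_right_comm]
  exact log_ncard_proj_le z hε0 hε1 X (Fn n) (hvanish (Fn n) (hFne n) hn.le)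

/-- if for some `δ > 0`, on every `(1,δ)`-invariant finite `F` every
`x ∈ X` vanishes outside at most `ε|F|` points, then `h(X) ≤ ε log(3|A|/ε)`;
entropy is the Følner limit of `(1/|Fₙ|) log |X_{Fₙ}|`. -/
theorem stmt_11 {G A : Type*} [Group G] [DecidableEq G] [Fintype A]
    (gen : Finset G) (hgen : Subgroup.closure (gen : Set G) = ⊤)
    (z : A) (X : Set (G → A))
    (hXclosed : @IsClosed (G → A) (@Pi.topologicalSpace G (fun _ => A) (fun _ => ⊥)) X)
    (hXinv : ∀ (g : G), ∀ x ∈ X, (fun h => x (g⁻¹ * h)) ∈ X)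
    (ε : ℝ) (hε0 : 0 < ε) (hε1 : ε ≤ 1)
    (δ : ℝ) (hδ : 0 < δ)
    (hvanish : ∀ F : Finset G, F.Nonempty → rho gen 1 F ≤ δ →
      ∀ x ∈ X, (({g ∈ (F : Set G) | x g ≠ z}).ncard : ℝ) ≤ ε * F.card)
    (Fn : ℕ → Finset G) (hFne : ∀ n, (Fn n).Nonempty)
    (hFol : Tendsto (fun n => rho gen 1 (Fn n)) atTop (nhds 0))
    (h : ℝ)
    (hlim : Tendsto (fun n => Real.log ((proj X (Fn n)).ncard) / (Fn n).card)
      atTop (nhds h)) :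
    h ≤ ε * Real.log (3 * Fintype.card A / ε) :=
  stmt_11_general gen z X ε hε0 hε1 δ hδ hvanish Fn hFne hFol h hlim
end

section
/- If Q is a shift of 𝒯-quasi-tilings whose error density is at most ε/2 and 𝒯 is (r, ε/2)-invariant, then the r-exterior density of Q is at most ε. -/
/-!
A point of `F` in the `r`-exterior is either a `T`-error or lies in the `r`-boundary of a tile
meeting `F`. By invariance of the tiles these boundaries have total size at most `ε/2` times the
total size of the tiles meeting `F`. Those tiles are disjoint and cover `F` minus its errors, and
since their diameters are bounded by some `R`, their part outside `F` lies in the `R`-boundary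
of `F`, which is at most `|ball R|` times the `1`-boundary. For `δ'` small this gives
`e + (ε/2)(|F| - e + (ε/2)|F|) ≤ ε|F|` with `e ≤ (ε/2)|F|` the number of errors.
-/
open Pointwise Filter

/-- The union of all tile-translates of a quasi-tiling `T`. -/
def tiles {G : Type*} [Group G] (T : G → Finset G) : Set G :=
  ⋃ h, h • ((T h : Finset G) : Set G)

/-- The set of `T`-errors in `F`: elements of `F` covered by no tile-translate. -/
def errSet {G : Type*} [Group G] (T : G → Finset G) (F : Finset G) : Set G :=
  {g ∈ (F : Set G) | g ∉ tiles T}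

/-- The `r`-exterior of a quasi-tiling `T`: the complement of the union of the
tile-translates with their `r`-boundaries removed. -/
def rExterior {G : Type*} [Group G] [DecidableEq G]
    (gen : Finset G) (r : ℕ) (T : G → Finset G) : Set G :=
  (⋃ h, (h • ((T h : Finset G) : Set G) \ bdry gen r (h • ((T h : Finset G) : Set G))))ᶜ


section Ball

variable {G : Type*} [Group G] [DecidableEq G] (gen : Finset G)

lemma ball_one : ball gen 1 = insert 1 (gen ∪ gen⁻¹) := pow_one _

lemma one_mem_ball (r : ℕ) : (1 : G) ∈ ball gen r :=
  Finset.one_mem_pow (Finset.mem_insert_self _ _)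

lemma ball_add_eq_mul (r s : ℕ) : ball gen (r + s) = ball gen r * ball gen s := pow_add _ _ _

lemma ball_mono {r s : ℕ} (h : r ≤ s) : ball gen r ⊆ ball gen s :=
  Finset.pow_subset_pow_right (Finset.mem_insert_self _ _) h

lemma inv_ball_eq (r : ℕ) : (ball gen r)⁻¹ = ball gen r := by
  have : (insert (1 : G) (gen ∪ gen⁻¹))⁻¹ = insert 1 (gen ∪ gen⁻¹) := by
    ext x
    simp only [Finset.mem_inv', Finset.mem_insert, Finset.mem_union, inv_eq_one, inv_inv]
    tauto
  rw [ball, ← inv_pow, this]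

lemma inv_mem_ball {r : ℕ} {b : G} (h : b ∈ ball gen r) : b⁻¹ ∈ ball gen r := by
  rw [← inv_ball_eq gen r]
  exact Finset.inv_mem_inv h

lemma exists_mem_ball (hgen : Subgroup.closure (gen : Set G) = ⊤) (g : G) :
    ∃ r, g ∈ ball gen r := by
  have hg : g ∈ Subgroup.closure (gen : Set G) := hgen ▸ Subgroup.mem_top g
  induction hg using Subgroup.closure_induction with
  | mem x hx => exact ⟨1, by rw [ball_one]; simp [Finset.mem_coe.mp hx]⟩
  | one => exact ⟨0, one_mem_ball gen 0⟩
  | mul x y _ _ hx hy =>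
    obtain ⟨r, hr⟩ := hx
    obtain ⟨s, hs⟩ := hy
    exact ⟨r + s, ball_add_eq_mul gen r s ▸ Finset.mul_mem_mul hr hs⟩
  | inv x _ hx =>
    obtain ⟨r, hr⟩ := hx
    exact ⟨r, inv_mem_ball gen hr⟩

lemma exists_subset_ball (hgen : Subgroup.closure (gen : Set G) = ⊤) (C : Finset G) :
    ∃ r, C ⊆ ball gen r := by
  choose rad hrad using exists_mem_ball gen hgen
  exact ⟨C.sup rad, fun x hx => ball_mono gen (Finset.le_sup hx) (hrad x)⟩

end Ball

section Boundary

variable {G : Type*} [Group G] [DecidableEq G] (gen : Finset G)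

lemma bdry_smul (r : ℕ) (h : G) (A : Set G) : bdry gen r (h • A) = h • bdry gen r A := by
  ext g
  simp only [Set.mem_smul_set_iff_inv_smul_mem, smul_eq_mul, bdry, Set.mem_ofPred_eq, mul_assoc]

lemma bdry_subset_mul_ball (r : ℕ) (A : Set G) : bdry gen r A ⊆ A * (ball gen r : Set G) := by
  rintro g ⟨⟨b, hb, hgb⟩, -⟩
  exact ⟨g * b, hgb, b⁻¹, inv_mem_ball gen hb, by group⟩

lemma bdry_finite {A : Set G} (hA : A.Finite) (r : ℕ) : (bdry gen r A).Finite :=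
  (hA.mul (ball gen r).finite_toSet).subset (bdry_subset_mul_ball gen r A)

lemma mul_mem_iff_of_notMem_bdry_one {F : Set G} {x s : G} (hx : x ∉ bdry gen 1 F)
    (hs : s ∈ ball gen 1) : x * s ∈ F ↔ x ∈ F := by
  have h1 : (1 : G) ∈ ball gen 1 := one_mem_ball gen 1
  constructor
  · intro hxs
    by_contra hxF
    exact hx ⟨⟨s, hs, hxs⟩, ⟨1, h1, by rwa [mul_one]⟩⟩
  · intro hxF
    by_contra hxs
    exact hx ⟨⟨1, h1, by rwa [mul_one]⟩, ⟨s, hs, hxs⟩⟩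

lemma mul_mem_iff_of_forall_notMem_bdry_one {F : Set G} {g : G} {n : ℕ}
    (h : ∀ b ∈ ball gen n, g * b ∉ bdry gen 1 F) {c : G} (hc : c ∈ ball gen n) :
    g * c ∈ F ↔ g ∈ F := by
  induction n generalizing c with
  | zero =>
    rw [ball, pow_zero, Finset.mem_one] at hc
    rw [hc, mul_one]
  | succ n ih =>
    have hle : ball gen n ⊆ ball gen (n + 1) := ball_mono gen n.le_succ
    rw [ball_add_eq_mul, Finset.mem_mul] at hc
    obtain ⟨c', hc', s, hs, rfl⟩ := hc
    rw [← mul_assoc, mul_mem_iff_of_notMem_bdry_one gen (h c' (hle hc')) hs]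
    exact ih (fun b hb => h b (hle hb)) hc'

lemma bdry_subset_bdry_one_mul_ball (r : ℕ) (F : Set G) :
    bdry gen r F ⊆ bdry gen 1 F * (ball gen r : Set G) := by
  rintro g ⟨⟨b, hb, hgb⟩, ⟨b', hb', hgb'⟩⟩
  by_contra hg
  have hcross : ∀ c ∈ ball gen r, g * c ∉ bdry gen 1 F := fun c hc hgc =>
    hg ⟨g * c, hgc, c⁻¹, inv_mem_ball gen hc, by group⟩
  exact hgb' ((mul_mem_iff_of_forall_notMem_bdry_one gen hcross hb').2
    ((mul_mem_iff_of_forall_notMem_bdry_one gen hcross hb).1 hgb))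

lemma ncard_bdry_le_ncard_bdry_one_mul {F : Set G} (hF : F.Finite) (r : ℕ) :
    (bdry gen r F).ncard ≤ (bdry gen 1 F).ncard * (ball gen r).card := by
  calc (bdry gen r F).ncard ≤ (bdry gen 1 F * (ball gen r : Set G)).ncard :=
        Set.ncard_le_ncard (bdry_subset_bdry_one_mul_ball gen r F)
          ((bdry_finite gen hF 1).mul (ball gen r).finite_toSet)
    _ ≤ (bdry gen 1 F).ncard * (ball gen r : Set G).ncard := Set.natCard_mul_le
    _ = (bdry gen 1 F).ncard * (ball gen r).card := by rw [Set.ncard_coe_finset]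

end Boundary

section QuasiTiling

variable {G : Type*} [Group G] {𝒯 : Finset (Finset G)} {T : G → Finset G}

lemma IsQT.mem_of_mem (hT : IsQT 𝒯 T) {h y : G} (hy : y ∈ T h) : T h ∈ 𝒯 :=
  (hT.1 h).resolve_right (Finset.ne_empty_of_mem hy)

variable [DecidableEq G]

lemma IsQT.subset_sup_s12 (hT : IsQT 𝒯 T) (h : G) : T h ⊆ 𝒯.sup id := fun _ hy =>
  Finset.le_sup (f := id) (hT.mem_of_mem hy) hy

lemma IsQT.card_biUnion_smul (hT : IsQT 𝒯 T) (H : Finset G) :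
    (H.biUnion fun h => h • T h).card = ∑ h ∈ H, (T h).card := by
  rw [Finset.card_biUnion]
  · simp only [Finset.card_smul_finset]
  · intro g _ h _ hgh
    rw [Function.onFun, ← Finset.disjoint_coe, Finset.coe_smul_finset, Finset.coe_smul_finset]
    exact hT.2 g h hgh

lemma exists_finset_mem_iff_meets (F U : Finset G) (hU : ∀ h, T h ⊆ U) :
    ∃ H : Finset G, ∀ h, h ∈ H ↔ ∃ y ∈ T h, h * y ∈ F := by
  refine ⟨(F * U⁻¹).filter fun h => ∃ y ∈ T h, h * y ∈ F, fun h => ?_⟩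
  rw [Finset.mem_filter, and_iff_right_iff_imp]
  rintro ⟨y, hy, hhy⟩
  exact Finset.mem_mul.mpr ⟨h * y, hhy, y⁻¹, Finset.inv_mem_inv (hU h hy), by group⟩

variable (gen : Finset G) (F : Finset G)

lemma rExterior_inter_subset (r : ℕ) (H : Finset G)
    (hH : ∀ h, ∀ y ∈ T h, h * y ∈ F → h ∈ H) :
    rExterior gen r T ∩ F ⊆
      errSet T F ∪ ⋃ h ∈ H, bdry gen r (h • ((T h : Finset G) : Set G)) := by
  rintro g ⟨hgext, hgF⟩
  by_cases ht : g ∈ tiles T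
  · obtain ⟨h, hgh⟩ := Set.mem_iUnion.mp ht
    obtain ⟨y, hy, rfl⟩ := Set.mem_smul_set.mp hgh
    refine Or.inr (Set.mem_biUnion (hH h y hy hgF) ?_)
    by_contra hnb
    exact hgext (Set.mem_iUnion.mpr ⟨h, hgh, hnb⟩)
  · exact Or.inl ⟨hgF, ht⟩

/-- A tile meeting `F` lies within distance `R` of `F`, so its part outside `F` lies in the
`R`-boundary of `F`. -/
lemma card_biUnion_smul_add_ncard_errSet_le (R : ℕ) (H : Finset G)
    (hH : ∀ h ∈ H, ∃ y ∈ T h, h * y ∈ F)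
    (hR : ∀ h ∈ H, (T h)⁻¹ * T h ⊆ ball gen R) :
    (H.biUnion fun h => h • T h).card + (errSet T F).ncard ≤
      F.card + (bdry gen R (F : Set G)).ncard := by
  set S := H.biUnion fun h => h • T h
  have hin : ((S ∩ F : Finset G) : Set G) ⊆ F ∩ tiles T := by
    intro x hx
    obtain ⟨hxS, hxF⟩ := Finset.mem_inter.mp hx
    obtain ⟨h, -, hxh⟩ := Finset.mem_biUnion.mp hxS
    rw [← Finset.mem_coe, Finset.coe_smul_finset] at hxh
    exact ⟨hxF, Set.mem_iUnion.mpr ⟨h, hxh⟩⟩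
  have hout : ((S \ F : Finset G) : Set G) ⊆ bdry gen R F := by
    intro x hx
    obtain ⟨hxS, hxF⟩ := Finset.mem_sdiff.mp hx
    obtain ⟨h, hH', hxh⟩ := Finset.mem_biUnion.mp hxS
    obtain ⟨z, hz, rfl⟩ := Finset.mem_smul_finset.mp hxh
    obtain ⟨y, hy, hhy⟩ := hH h hH'
    refine ⟨⟨z⁻¹ * y, hR h hH' (Finset.mul_mem_mul (Finset.inv_mem_inv hz) hy), ?_⟩,
      ⟨1, one_mem_ball gen R, by rwa [mul_one]⟩⟩
    rwa [smul_eq_mul, mul_assoc, mul_inv_cancel_left]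
  have hsplit := Finset.card_inter_add_card_sdiff S F
  have hF := Set.ncard_inter_add_ncard_sdiff_eq_ncard (F : Set G) (tiles T) F.finite_toSet
  have h1 := Set.ncard_le_ncard hin (F.finite_toSet.inter_of_left _)
  have h2 := Set.ncard_le_ncard hout (bdry_finite gen F.finite_toSet R)
  rw [Set.ncard_coe_finset] at hF h1 h2
  change _ + (F \ tiles T : Set G).ncard ≤ _
  omega

theorem IsQT.ncard_rExterior_inter_le (hT : IsQT 𝒯 T) {r R : ℕ} {κ : ℝ} (hκ : 0 ≤ κ)
    (hinv : ∀ t ∈ 𝒯, ((bdry gen r (t : Set G)).ncard : ℝ) ≤ κ * t.card)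
    (hR : ∀ t ∈ 𝒯, t⁻¹ * t ⊆ ball gen R) :
    ((rExterior gen r T ∩ F).ncard : ℝ) ≤
      (errSet T F).ncard + κ * (F.card + (bdry gen R (F : Set G)).ncard - (errSet T F).ncard) := by
  obtain ⟨H, hH⟩ := exists_finset_mem_iff_meets F _ hT.subset_sup_s12
  have hH𝒯 : ∀ h ∈ H, T h ∈ 𝒯 := fun h hh => by
    obtain ⟨y, hy, -⟩ := (hH h).1 hh
    exact hT.mem_of_mem hy
  have hcover := rExterior_inter_subset gen F r H fun h y hy hhy => (hH h).2 ⟨y, hy, hhy⟩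
  have hfin : (errSet T F ∪ ⋃ h ∈ H, bdry gen r (h • ((T h : Finset G) : Set G))).Finite :=
    (F.finite_toSet.subset (Set.sep_subset _ _)).union <| H.finite_toSet.biUnion fun h _ =>
      bdry_finite gen ((T h).finite_toSet.smul_set) r
  have hcount : (rExterior gen r T ∩ F).ncard ≤
      (errSet T F).ncard + ∑ h ∈ H, (bdry gen r ((T h : Finset G) : Set G)).ncard := by
    calc (rExterior gen r T ∩ F).ncard
        ≤ (errSet T F ∪ ⋃ h ∈ H, bdry gen r (h • ((T h : Finset G) : Set G))).ncard :=
          Set.ncard_le_ncard hcover hfin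
      _ ≤ (errSet T F).ncard +
            ∑ h ∈ H, (bdry gen r (h • ((T h : Finset G) : Set G))).ncard :=
          (Set.ncard_union_le _ _).trans (Nat.add_le_add_left (H.set_ncard_biUnion_le _) _)
      _ = _ := by simp only [bdry_smul, Set.ncard_smul_set]
  have hbdry : (∑ h ∈ H, (bdry gen r ((T h : Finset G) : Set G)).ncard : ℝ) ≤
      κ * ∑ h ∈ H, ((T h).card : ℝ) := by
    rw [Finset.mul_sum]
    exact Finset.sum_le_sum fun h hh => hinv _ (hH𝒯 h hh)
  have htiles : ((∑ h ∈ H, (T h).card : ℕ) : ℝ) + (errSet T F).ncard ≤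
      F.card + (bdry gen R (F : Set G)).ncard := by
    rw [← hT.card_biUnion_smul]
    exact_mod_cast card_biUnion_smul_add_ncard_errSet_le gen F R H (fun h hh => (hH h).1 hh)
      fun h hh => hR _ (hH𝒯 h hh)
  push_cast at htiles
  calc ((rExterior gen r T ∩ F).ncard : ℝ)
      ≤ (errSet T F).ncard +
          ∑ h ∈ H, ((bdry gen r ((T h : Finset G) : Set G)).ncard : ℝ) := by
        exact_mod_cast hcount
    _ ≤ (errSet T F).ncard + κ * ∑ h ∈ H, ((T h).card : ℝ) := by gcongr
    _ ≤ _ := by gcongr; linarith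

end QuasiTiling

lemma le_mul_of_le_add_half_mul {N E D f ε : ℝ} (hN : N ≤ E + ε / 2 * (f + D - E))
    (hE : E ≤ ε / 2 * f) (hD : D ≤ min 1 (ε / 2) * f) (hε : 0 < ε) (hE0 : 0 ≤ E) :
    N ≤ ε * f := by
  have hf : 0 ≤ f := by nlinarith
  rcases le_total ε 2 with h2 | h2
  · have hD' : D ≤ ε / 2 * f := hD.trans (by gcongr; exact min_le_right _ _)
    nlinarith [mul_le_mul_of_nonneg_left hE (by linarith : (0:ℝ) ≤ 1 - ε / 2)]
  · have hD' : D ≤ f := hD.trans (mul_le_of_le_one_left hf (min_le_left _ _))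
    nlinarith

theorem stmt_12_general {G : Type*} [Group G] [DecidableEq G]
    (gen : Finset G) (hgen : Subgroup.closure (gen : Set G) = ⊤)
    (𝒯 : Finset (Finset G))
    (r : ℕ) (ε : ℝ) (hε : 0 < ε)
    (hinv : ∀ t ∈ 𝒯, ((bdry gen r (t : Set G)).ncard : ℝ) ≤ ε / 2 * t.card)
    (Q : Set (G → Finset G)) (hQT : ∀ T ∈ Q, IsQT 𝒯 T)
    (δ : ℝ) (hδ : 0 < δ)
    (herr : ∀ T ∈ Q, ∀ F : Finset G, F.Nonempty → rho gen 1 F ≤ δ →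
      ((errSet T F).ncard : ℝ) ≤ ε / 2 * F.card) :
    ∃ δ' > (0 : ℝ), ∀ T ∈ Q, ∀ F : Finset G, F.Nonempty → rho gen 1 F ≤ δ' →
      (((rExterior gen r T ∩ (F : Set G)).ncard : ℝ)) ≤ ε * F.card := by
  obtain ⟨R, hR⟩ := exists_subset_ball gen hgen (𝒯.biUnion fun t => t⁻¹ * t)
  have hc : (0 : ℝ) < (ball gen R).card := by
    exact_mod_cast Finset.card_pos.mpr ⟨1, one_mem_ball gen R⟩
  refine ⟨min δ (min 1 (ε / 2) / (ball gen R).card), lt_min hδ (by positivity),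
    fun T hT F hF hρ => ?_⟩
  have hFpos : (0 : ℝ) < F.card := by exact_mod_cast hF.card_pos
  have hρF := (div_le_iff₀ hFpos).mp hρ
  have hD : ((bdry gen R (F : Set G)).ncard : ℝ) ≤ min 1 (ε / 2) * F.card :=
    calc ((bdry gen R (F : Set G)).ncard : ℝ)
        ≤ (bdry gen 1 (F : Set G)).ncard * (ball gen R).card := by
          exact_mod_cast ncard_bdry_le_ncard_bdry_one_mul gen F.finite_toSet R
      _ ≤ min 1 (ε / 2) / (ball gen R).card * F.card * (ball gen R).card := by
          gcongr
          exact hρF.trans (by gcongr; exact min_le_right _ _)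
      _ = min 1 (ε / 2) * F.card := by field_simp
  exact le_mul_of_le_add_half_mul
    ((hQT T hT).ncard_rExterior_inter_le gen F (by positivity) hinv
      fun t ht => (Finset.subset_biUnion_of_mem (fun t => t⁻¹ * t) ht).trans hR)
    (herr T hT F hF (hρ.trans (min_le_left _ _))) hD hε (Nat.cast_nonneg _)

/-- if `Q` is a shift of `𝒯`-quasi-tilings with error density at most `ε/2`
and every tile of `𝒯` is `(r,ε/2)`-invariant, then the `r`-exterior density of `Q`
is at most `ε`. -/
theorem stmt_12 {G : Type*} [Group G] [DecidableEq G]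
    (gen : Finset G) (hgen : Subgroup.closure (gen : Set G) = ⊤)
    (𝒯 : Finset (Finset G)) (h1 : ∀ t ∈ 𝒯, (1 : G) ∈ t)
    (r : ℕ) (ε : ℝ) (hε : 0 < ε)
    (hinv : ∀ t ∈ 𝒯, ((bdry gen r (t : Set G)).ncard : ℝ) ≤ ε / 2 * t.card)
    (Q : Set (G → Finset G)) (hQT : ∀ T ∈ Q, IsQT 𝒯 T)
    (hQinv : ∀ (g : G), ∀ T ∈ Q, (fun h => T (g⁻¹ * h)) ∈ Q)
    (δ : ℝ) (hδ : 0 < δ)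
    (herr : ∀ T ∈ Q, ∀ F : Finset G, F.Nonempty → rho gen 1 F ≤ δ →
      ((errSet T F).ncard : ℝ) ≤ ε / 2 * F.card) :
    ∃ δ' > (0 : ℝ), ∀ T ∈ Q, ∀ F : Finset G, F.Nonempty → rho gen 1 F ≤ δ' →
      (((rExterior gen r T ∩ (F : Set G)).ncard : ℝ)) ≤ ε * F.card :=
  stmt_12_general gen hgen 𝒯 r ε hε hinv Q hQT δ hδ herr
end

section
/- If X is a shift of finite type defined by forbidden patterns on a ball B_R, and X^n → X in the space of shifts, then X^n ⊆ X for all sufficiently large n. -/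
open Pointwise Filter

def forbiddenShift {G A : Type*} [Mul G] {B : Finset G} (P : Set (B → A)) : Set (G → A) :=
  {x | ∀ g : G, (fun k : B => x (g * (k : G))) ∉ P}

theorem subset_forbiddenShift_of_proj_subset {G A : Type*} [Group G] {B : Finset G}
    {P : Set (B → A)} {Y : Set (G → A)}
    (hY : ∀ g : G, ∀ y ∈ Y, (fun h => y (g⁻¹ * h)) ∈ Y)
    (hproj : proj Y B ⊆ proj (forbiddenShift P) B) :
    Y ⊆ forbiddenShift P := by
  intro y hy g hg
  -- Translating by `g` moves the window at `g` to the window at `1`, where `y` agrees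
  -- with a point of the shift.
  obtain ⟨x, hx, hxy⟩ := hproj ⟨_, hY g⁻¹ y hy, fun _ => rfl⟩
  refine hx 1 ?_
  convert hg using 1
  funext k
  simpa using (hxy k).symm

theorem stmt_19_general {G A : Type*} [Group G]
    (B : Finset G)
    (P : Set (B → A))
    (X : Set (G → A))
    (hX : X = {x : G → A | ∀ g : G, (fun k : B => x (g * (k : G))) ∉ P})
    (Xs : ℕ → Set (G → A))
    (hXsinv : ∀ n, ∀ (g : G), ∀ x ∈ Xs n, (fun h => x (g⁻¹ * h)) ∈ Xs n)
    (hconv : ∀ K : Finset G, ∀ᶠ n in atTop, proj (Xs n) K = proj X K) :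
    ∀ᶠ n in atTop, Xs n ⊆ X := by
  subst hX
  filter_upwards [hconv B] with n hn
  exact subset_forbiddenShift_of_proj_subset (hXsinv n) hn.le

/-- let `X` be the SFT defined by forbidding the patterns `P` on the
ball `B = B_R`. If the shifts `Xₙ` converge to `X` (projections agree on every finite set
eventually), then `Xₙ ⊆ X` for all sufficiently large `n`. -/
theorem stmt_19 {G A : Type*} [Group G] [DecidableEq G]
    (gen : Finset G) (hgen : Subgroup.closure (gen : Set G) = ⊤)
    (R : ℕ) (B : Finset G) (hB : B = ball gen R)
    (P : Set (B → A))
    (X : Set (G → A))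
    (hX : X = {x : G → A | ∀ g : G, (fun k : B => x (g * (k : G))) ∉ P})
    (Xs : ℕ → Set (G → A))
    (hXsinv : ∀ n, ∀ (g : G), ∀ x ∈ Xs n, (fun h => x (g⁻¹ * h)) ∈ Xs n)
    (hconv : ∀ K : Finset G, ∀ᶠ n in atTop, proj (Xs n) K = proj X K) :
    ∀ᶠ n in atTop, Xs n ⊆ X :=
  stmt_19_general B P X hX Xs hXsinv hconv
end
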